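/- arXiv:2210.07402 — 3 statements merged into one kernel-verified Lean document; each statement's English description precedes it below -/
import Mathlib

section
/- For a linear code C ⊆ F_q^n, (σ^{e-κ}(C))_{⊥_κ} = C^⊥ = σ^{e-κ}(C_{⊥_κ}). -/
/-!
Since `x ^ p ^ e = x` on `𝔽_q`, the maps `x ↦ x ^ p ^ κ` and `x ↦ x ^ p ^ (e - κ)` are
mutually inverse ring automorphisms `σ` and `σ⁻¹`. Twisting the pairing by `σ` is then
undone by applying `σ⁻¹` to either argument: to the codewords, directly, and to the dual
vector, because `σ⁻¹` commutes with sums and products.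
-/

/-- For `τ = iterateFrobenius F p κ` this is the left `κ`-Galois dual `C_{⊥_κ}`, for
`τ = RingHom.id` the Euclidean dual `C^⊥`. -/
def galoisDual {R ι : Type*} [Semiring R] [Fintype ι] (τ : R →+* R) (S : Set (ι → R)) :
    Set (ι → R) :=
  {a | ∀ c ∈ S, ∑ i, a i * τ (c i) = 0}

section galoisDual

variable {R ι : Type*} [Semiring R] [Fintype ι]

theorem galoisDual_image_symm (σ : R ≃+* R) (S : Set (ι → R)) :
    galoisDual (σ : R →+* R) ((σ.symm ∘ ·) '' S) = galoisDual (RingHom.id R) S := by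
  ext a
  simp [galoisDual]

theorem mem_galoisDual_iff (σ : R ≃+* R) (S : Set (ι → R)) (a : ι → R) :
    a ∈ galoisDual (σ : R →+* R) S ↔ σ.symm ∘ a ∈ galoisDual (RingHom.id R) S := by
  refine forall₂_congr fun c _ => ?_
  calc ∑ i, a i * σ (c i) = 0
      ↔ σ.symm (∑ i, a i * σ (c i)) = σ.symm 0 := σ.symm.injective.eq_iff.symm
    _ ↔ ∑ i, σ.symm (a i) * c i = 0 := by simp [map_sum]

theorem galoisDual_id_eq_image_symm (σ : R ≃+* R) (S : Set (ι → R)) :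
    galoisDual (RingHom.id R) S = (σ.symm ∘ ·) '' galoisDual (σ : R →+* R) S := by
  ext a
  constructor
  · intro ha
    refine ⟨σ ∘ a, ?_, by ext; simp⟩
    rw [mem_galoisDual_iff]
    simpa [Function.comp_def] using ha
  · rintro ⟨b, hb, rfl⟩
    exact (mem_galoisDual_iff σ S b).mp hb

end galoisDual

theorem FiniteField.iterateFrobeniusEquiv_symm_apply {F : Type*} [Field F] [Fintype F]
    {p e κ : ℕ} [ExpChar F p] (hcard : Fintype.card F = p ^ e) (hκ : κ ≤ e) (x : F) :
    (iterateFrobeniusEquiv F p κ).symm x = x ^ p ^ (e - κ) := by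
  rw [RingEquiv.symm_apply_eq, iterateFrobeniusEquiv_def, ← pow_mul, ← pow_add,
    Nat.sub_add_cancel hκ, ← hcard, FiniteField.pow_card]

/-- For a linear code `C ⊆ F_q^n`, `(σ^{e-κ}(C))_{⊥_κ} = C^⊥ = σ^{e-κ}(C_{⊥_κ})`. -/
theorem leftGaloisDual_frob_image_eq_euclideanDual
    (p e κ n : ℕ) (hp : p.Prime) (hκ : κ < e)
    (F : Type) [Field F] [Fintype F] (hcard : Fintype.card F = p ^ e)
    (C : Submodule F (Fin n → F)) :
    {a : Fin n → F |
        ∀ c ∈ (fun v : Fin n → F => fun i => v i ^ p ^ (e - κ)) '' (C : Set (Fin n → F)),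
          ∑ i, a i * c i ^ p ^ κ = 0}
      = {a : Fin n → F | ∀ c ∈ C, ∑ i, a i * c i = 0} ∧
    {a : Fin n → F | ∀ c ∈ C, ∑ i, a i * c i = 0}
      = (fun v : Fin n → F => fun i => v i ^ p ^ (e - κ)) ''
          {a : Fin n → F | ∀ c ∈ C, ∑ i, a i * c i ^ p ^ κ = 0} := by
  have : Fact p.Prime := ⟨hp⟩
  have : CharP F p := charP_of_card_eq_prime_pow hcard
  set σ := iterateFrobeniusEquiv F p κ
  have hσ : (σ.symm ∘ ·) = fun v : Fin n → F => fun i => v i ^ p ^ (e - κ) := by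
    ext v i
    exact FiniteField.iterateFrobeniusEquiv_symm_apply hcard hκ.le (v i)
  rw [← hσ]
  exact ⟨galoisDual_image_symm σ (C : Set (Fin n → F)),
    galoisDual_id_eq_image_symm σ (C : Set (Fin n → F))⟩
end

section
/- For a linear code C ⊆ F_q^n, the right and left κ-Galois duals coincide, C^{⊥_κ} = C_{⊥_κ}, if and only if C is invariant under σ^{2κ}, i.e., σ^{2κ}(C) = C. -/
/-- For a linear code `C ⊆ F_q^n`, the right and left κ-Galois duals coincide,
`C^{⊥_κ} = C_{⊥_κ}`, if and only if `σ^{2κ}(C) = C`. -/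
theorem rightGaloisDual_eq_leftGaloisDual_iff
    (p e κ n : ℕ) (hp : p.Prime) (hκ : κ < e)
    (F : Type) [Field F] [Fintype F] (hcard : Fintype.card F = p ^ e)
    (C : Submodule F (Fin n → F)) :
    {a : Fin n → F | ∀ c ∈ C, ∑ i, c i * a i ^ p ^ κ = 0}
        = {a : Fin n → F | ∀ c ∈ C, ∑ i, a i * c i ^ p ^ κ = 0}
      ↔ (fun v : Fin n → F => fun i => v i ^ p ^ (2 * κ)) '' (C : Set (Fin n → F))
          = (C : Set (Fin n → F)) := by
  classical
  -- the characteristic of `F` is `p`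
  obtain ⟨m, hr, hcard'⟩ := FiniteField.card F (ringChar F)
  have hpr : ringChar F = p := by
    have hdvd : ringChar F ∣ p ^ e := by
      rw [← hcard, hcard']
      exact dvd_pow_self _ (by exact_mod_cast m.ne_zero)
    exact (Nat.prime_dvd_prime_iff_eq hr hp).mp (hr.dvd_of_dvd_pow hdvd)
  haveI : CharP F p := hpr ▸ ringChar.charP F
  haveI := Fact.mk hp
  -- Frobenius automorphisms
  let φ : F ≃+* F := iterateFrobeniusEquiv F p κ
  let ψ : F ≃+* F := iterateFrobeniusEquiv F p (2 * κ)
  have hφ : ∀ x : F, φ x = x ^ p ^ κ := fun x => rfl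
  have hψ : ∀ x : F, ψ x = x ^ p ^ (2 * κ) := fun x => rfl
  haveI : RingHomSurjective (ψ : F →+* F) := ⟨ψ.surjective⟩
  -- componentwise `ψ` as a semilinear map
  let gψ : (Fin n → F) →ₛₗ[(ψ : F →+* F)] (Fin n → F) :=
    { toFun := fun v i => ψ (v i)
      map_add' := fun x y => funext fun i => map_add ψ _ _
      map_smul' := fun c x => funext fun i => map_mul ψ _ _ }
  let C₂ : Submodule F (Fin n → F) := C.map gψ
  -- the dot-product bilinear form
  let B : LinearMap.BilinForm F (Fin n → F) :=
    LinearMap.mk₂ F (fun x y => ∑ i, x i * y i)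
      (fun x x' y => by simp [add_mul, Finset.sum_add_distrib])
      (fun c x y => by simp [Finset.mul_sum, mul_assoc])
      (fun x y y' => by simp [mul_add, Finset.sum_add_distrib])
      (fun c x y => by
        simp [Finset.mul_sum]
        exact Finset.sum_congr rfl fun i _ => by ring)
  have hBapp : ∀ x y : Fin n → F, B x y = ∑ i, x i * y i := fun x y => rfl
  have hB : B.Nondegenerate := by
    refine (LinearMap.IsRefl.nondegenerate_iff_separatingLeft
      (fun x y h => by rw [hBapp] at h ⊢; simpa [mul_comm] using h)).mpr ?_
    intro x h
    funext i
    have := h (Pi.single i 1)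
    rw [hBapp] at this
    simpa [Pi.single_apply, mul_ite, Finset.sum_ite_eq'] using this
  have hB0 : B.IsRefl := by
    intro x y h
    rw [hBapp] at h ⊢
    simpa [mul_comm] using h
  -- the componentwise `φ` map
  have hΦsurj : Function.Surjective (fun a : Fin n → F => fun i => φ (a i)) :=
    fun a => ⟨fun i => φ.symm (a i), funext fun i => φ.apply_symm_apply _⟩
  -- key computation
  have key : ∀ c a : Fin n → F, (∑ i, ψ (c i) * φ (a i)) = φ (∑ i, a i * c i ^ p ^ κ) := by
    intro c a
    rw [map_sum]
    refine Finset.sum_congr rfl fun i _ => ?_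
    rw [map_mul, mul_comm, hφ, hφ, hψ, ← pow_mul, ← pow_add, two_mul]
  have h1 : {a : Fin n → F | ∀ c ∈ C, ∑ i, c i * a i ^ p ^ κ = 0}
      = (fun a : Fin n → F => fun i => φ (a i)) ⁻¹' (B.orthogonal C : Set (Fin n → F)) := by
    ext a
    simp only [Set.mem_setOf_eq, Set.mem_preimage, SetLike.mem_coe,
      LinearMap.BilinForm.mem_orthogonal_iff, LinearMap.BilinForm.isOrtho_def, hBapp]
    refine forall₂_congr fun c _ => ?_
    simp_rw [hφ]
  have h2 : {a : Fin n → F | ∀ c ∈ C, ∑ i, a i * c i ^ p ^ κ = 0}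
      = (fun a : Fin n → F => fun i => φ (a i)) ⁻¹' (B.orthogonal C₂ : Set (Fin n → F)) := by
    ext a
    simp only [Set.mem_setOf_eq, Set.mem_preimage, SetLike.mem_coe,
      LinearMap.BilinForm.mem_orthogonal_iff, LinearMap.BilinForm.isOrtho_def, hBapp]
    constructor
    · rintro h d hd
      obtain ⟨c, hc, rfl⟩ := hd
      show (∑ i, ψ (c i) * φ (a i)) = 0
      rw [key, h c hc, map_zero]
    · intro h c hc
      have hd := h (gψ c) (Submodule.mem_map_of_mem hc)
      have : (∑ i, ψ (c i) * φ (a i)) = 0 := hd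
      rw [key] at this
      exact (map_eq_zero_iff φ φ.injective).mp this
  have himg : (fun v : Fin n → F => fun i => v i ^ p ^ (2 * κ)) '' (C : Set (Fin n → F))
      = (C₂ : Set (Fin n → F)) := by
    rw [Submodule.map_coe]
    rfl
  rw [h1, h2, Set.preimage_eq_preimage hΦsurj, himg, SetLike.coe_set_eq, SetLike.coe_set_eq]
  constructor
  · intro h
    have h' := congrArg B.orthogonal h
    rwa [LinearMap.BilinForm.orthogonal_orthogonal hB hB0,
      LinearMap.BilinForm.orthogonal_orthogonal hB hB0, eq_comm] at h'
  · intro h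
    rw [h]
end

section
/- If C ⊆ F_q^n is a Λ-multi-twisted code (T_Λ-invariant subspace), then its right κ-Galois dual C^{⊥_κ} is a σ^{e-κ}(Δ)-multi-twisted code, i.e., invariant under T_{σ^{e-κ}(Δ)} where Δ = (λ_1^{-1},...,λ_ℓ^{-1}) and σ^{e-κ}(Δ) = (λ_1^{-p^{e-κ}},...,λ_ℓ^{-p^{e-κ}}). -/
/-- The multi-twist shift of `⊕_j F^{m_j}` with shift constants `Λ`. -/
def twistShift {F : Type} [Field F] {ℓ : ℕ} (m : Fin ℓ → ℕ) (Λ : Fin ℓ → F)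
    (a : ∀ j, Fin (m j) → F) : ∀ j, Fin (m j) → F :=
  fun j i =>
    if (i : ℕ) = 0 then Λ j * a j ⟨m j - 1, by have := i.isLt; omega⟩
    else a j ⟨(i : ℕ) - 1, by have := i.isLt; omega⟩

/-!
Shifting the summation index by one turns the κ-Galois pairing of `T_Λ c` and `T_μ a` into that
of `c` and `a`, with the wrap-around term multiplied by `Λ_j μ_j^{p^κ}`; for
`μ_j = λ_j^{-p^{e-κ}}` this factor is `λ_j λ_j⁻¹ = 1`, since `x ↦ x^{p^e}` is the identity on
`F_q`. As `T_Λ` is injective and `C` is finite, every `c ∈ C` is `T_Λ c'` for some `c' ∈ C`, so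
`⟨c, T_μ a⟩_κ = ⟨c', a⟩_κ = 0` for `a ∈ C^{⊥_κ}`.
-/

theorem FiniteField.pow_pow_sub_pow_eq_self {F : Type} [Field F] [Fintype F] {p e k : ℕ}
    (hcard : Fintype.card F = p ^ e) (hk : k ≤ e) (x : F) :
    (x ^ p ^ (e - k)) ^ p ^ k = x := by
  rw [← pow_mul, ← pow_add, Nat.sub_add_cancel hk, ← hcard, FiniteField.pow_card]

section TwistShift

variable {F : Type} [Field F] {ℓ : ℕ} {m : Fin ℓ → ℕ}

theorem twistShift_apply_add_one (Λ : Fin ℓ → F) (x : ∀ j, Fin (m j) → F) (j : Fin ℓ)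
    [NeZero (m j)] (i : Fin (m j)) :
    twistShift m Λ x j (i + 1) = if (i : ℕ) = m j - 1 then Λ j * x j i else x j i := by
  have hpos : 0 < m j := NeZero.pos _
  have hval : ((i + 1 : Fin (m j)) : ℕ) = (i + 1) % m j := by
    rw [Fin.val_add, Fin.val_one', Nat.add_mod_mod]
  by_cases hlast : (i : ℕ) = m j - 1
  · have hzero : ((i + 1 : Fin (m j)) : ℕ) = 0 := by
      rw [hval, hlast, Nat.sub_add_cancel hpos, Nat.mod_self]
    simp only [twistShift, hzero, hlast, if_true]
    congr
    exact hlast.symm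
  · have hsucc : ((i + 1 : Fin (m j)) : ℕ) = i + 1 := by
      rw [hval, Nat.mod_eq_of_lt (by omega)]
    simp only [twistShift, hsucc, hlast, Nat.add_one_ne_zero, if_false, Nat.add_sub_cancel]

theorem twistShift_injective {Λ : Fin ℓ → F} (hΛ : ∀ j, Λ j ≠ 0) :
    Function.Injective (twistShift m Λ) := by
  intro x y hxy
  funext j i
  have : NeZero (m j) := ⟨i.pos.ne'⟩
  have h := congrFun (congrFun hxy j) (i + 1)
  rw [twistShift_apply_add_one, twistShift_apply_add_one] at h
  split_ifs at h
  · exact mul_left_cancel₀ (hΛ j) h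
  · exact h

theorem twistShift_surjOn_of_mapsTo [Finite F] {Λ : Fin ℓ → F} (hΛ : ∀ j, Λ j ≠ 0)
    {C : Set (∀ j, Fin (m j) → F)} (hC : Set.MapsTo (twistShift m Λ) C C) :
    Set.SurjOn (twistShift m Λ) C C :=
  ((Set.toFinite C).injOn_iff_bijOn_of_mapsTo hC |>.mp (twistShift_injective hΛ).injOn).surjOn

theorem sum_twistShift_mul_twistShift_pow {Λ μ : Fin ℓ → F} {n : ℕ} (j : Fin ℓ)
    (hΛμ : Λ j * μ j ^ n = 1) (c a : ∀ j, Fin (m j) → F) :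
    ∑ i, twistShift m Λ c j i * twistShift m μ a j i ^ n = ∑ i, c j i * a j i ^ n := by
  rcases isEmpty_or_nonempty (Fin (m j)) with _ | ⟨⟨i₀⟩⟩
  · simp only [Finset.univ_eq_empty, Finset.sum_empty]
  have : NeZero (m j) := ⟨i₀.pos.ne'⟩
  rw [← Equiv.sum_comp (Equiv.addRight (1 : Fin (m j)))]
  refine Finset.sum_congr rfl fun i _ => ?_
  simp only [Equiv.coe_addRight, twistShift_apply_add_one]
  split_ifs
  · linear_combination (c j i * a j i ^ n) * hΛμ
  · rfl

end TwistShift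

theorem rightGaloisDual_twistShift_invariant_general
    (p e κ : ℕ) (hκ : κ < e)
    (F : Type) [Field F] [Fintype F] (hcard : Fintype.card F = p ^ e)
    (ℓ : ℕ) (m : Fin ℓ → ℕ)
    (Λ : Fin ℓ → F) (hΛ : ∀ j, Λ j ≠ 0)
    (C : Submodule F (∀ j, Fin (m j) → F))
    (hC : ∀ c ∈ C, twistShift m Λ c ∈ C) :
    ∀ a ∈ {a : ∀ j, Fin (m j) → F | ∀ c ∈ C, ∑ j, ∑ i, c j i * a j i ^ p ^ κ = 0},
      twistShift m (fun j => (Λ j)⁻¹ ^ p ^ (e - κ)) a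
        ∈ {a : ∀ j, Fin (m j) → F | ∀ c ∈ C, ∑ j, ∑ i, c j i * a j i ^ p ^ κ = 0} := by
  intro a ha c hc
  obtain ⟨c', hc'C, rfl⟩ := twistShift_surjOn_of_mapsTo hΛ hC hc
  have hΛμ (j : Fin ℓ) : Λ j * ((Λ j)⁻¹ ^ p ^ (e - κ)) ^ p ^ κ = 1 := by
    rw [FiniteField.pow_pow_sub_pow_eq_self hcard hκ.le, mul_inv_cancel₀ (hΛ j)]
  calc ∑ j, ∑ i, twistShift m Λ c' j i *
        twistShift m (fun j => (Λ j)⁻¹ ^ p ^ (e - κ)) a j i ^ p ^ κ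
      = ∑ j, ∑ i, c' j i * a j i ^ p ^ κ :=
        Finset.sum_congr rfl fun j _ => sum_twistShift_mul_twistShift_pow j (hΛμ j) c' a
    _ = 0 := ha c' hc'C

/-- If `C` is a `Λ`-multi-twisted code, then its right κ-Galois dual `C^{⊥_κ}` is a
`σ^{e-κ}(Δ)`-multi-twisted code, where `Δ = (λ_1⁻¹, ..., λ_ℓ⁻¹)`. -/
theorem rightGaloisDual_twistShift_invariant
    (p e κ : ℕ) (hp : p.Prime) (hκ : κ < e)
    (F : Type) [Field F] [Fintype F] (hcard : Fintype.card F = p ^ e)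
    (ℓ : ℕ) (m : Fin ℓ → ℕ) (hm : ∀ j, 0 < m j)
    (Λ : Fin ℓ → F) (hΛ : ∀ j, Λ j ≠ 0)
    (C : Submodule F (∀ j, Fin (m j) → F))
    (hC : ∀ c ∈ C, twistShift m Λ c ∈ C) :
    ∀ a ∈ {a : ∀ j, Fin (m j) → F | ∀ c ∈ C, ∑ j, ∑ i, c j i * a j i ^ p ^ κ = 0},
      twistShift m (fun j => (Λ j)⁻¹ ^ p ^ (e - κ)) a
        ∈ {a : ∀ j, Fin (m j) → F | ∀ c ∈ C, ∑ j, ∑ i, c j i * a j i ^ p ^ κ = 0} :=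
  rightGaloisDual_twistShift_invariant_general p e κ hκ F hcard ℓ m Λ hΛ C hC
end
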